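/- (Non-positivity of Liouvillian eigenvalues, Schrödinger picture) If ρ ≠ 0 is an eigenvector of the Lindblad generator L with eigenvalue λ, then Re(λ) ≤ 0. -/

import Mathlib

open Matrix

noncomputable def Lmap {n K : Type*} [Fintype n] [DecidableEq n] [Fintype K]
    (H : Matrix n n ℂ) (L : K → Matrix n n ℂ) (ρ : Matrix n n ℂ) : Matrix n n ℂ :=
  (-Complex.I) • (H * ρ - ρ * H) +
    ∑ k, (L k * ρ * (L k)ᴴ - (1/2 : ℂ) • ((L k)ᴴ * L k * ρ + ρ * ((L k)ᴴ * L k)))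

namespace LiouvilleAux

open scoped ComplexOrder

variable {n K : Type*} [Fintype n] [DecidableEq n] [Fintype K]

/-- The Heisenberg-picture adjoint generator. -/
noncomputable def Lstar (H : Matrix n n ℂ) (L : K → Matrix n n ℂ) (X : Matrix n n ℂ) :
    Matrix n n ℂ :=
  Complex.I • (H * X - X * H) +
    ∑ k, ((L k)ᴴ * X * L k - (1/2 : ℂ) • ((L k)ᴴ * L k * X + X * ((L k)ᴴ * L k)))

/-- `Lstar` bundled as a linear map. -/
noncomputable def LstarL (H : Matrix n n ℂ) (L : K → Matrix n n ℂ) :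
    Matrix n n ℂ →ₗ[ℂ] Matrix n n ℂ :=
  Complex.I • (LinearMap.mulLeft ℂ H - LinearMap.mulRight ℂ H) +
    ∑ k, ((LinearMap.mulRight ℂ (L k)).comp (LinearMap.mulLeft ℂ (L k)ᴴ) -
      (1/2 : ℂ) • (LinearMap.mulLeft ℂ ((L k)ᴴ * L k) + LinearMap.mulRight ℂ ((L k)ᴴ * L k)))

theorem LstarL_apply (H : Matrix n n ℂ) (L : K → Matrix n n ℂ) (X : Matrix n n ℂ) :
    LstarL H L X = Lstar H L X := by
  simp [LstarL, Lstar, LinearMap.sum_apply, LinearMap.sub_apply, LinearMap.add_apply,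
    LinearMap.smul_apply, LinearMap.comp_apply, LinearMap.mulLeft_apply,
    LinearMap.mulRight_apply, mul_assoc]

theorem trace_self_eq_zero (A : Matrix n n ℂ) (h : trace (Aᴴ * A) = 0) : A = 0 := by
  have ht : trace (Aᴴ * A) = ((∑ i, ∑ j, Complex.normSq (A j i) : ℝ) : ℂ) := by
    push_cast
    simp only [trace, Matrix.diag, Matrix.mul_apply, conjTranspose_apply,
      Complex.normSq_eq_conj_mul_self, Complex.star_def]
  rw [ht, Complex.ofReal_eq_zero] at h
  have hz : ∀ i ∈ Finset.univ, ∀ j ∈ Finset.univ, Complex.normSq (A (j:n) (i:n)) = 0 := by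
    have h1 := (Finset.sum_eq_zero_iff_of_nonneg (fun i _ =>
      Finset.sum_nonneg (fun j _ => Complex.normSq_nonneg _))).mp h
    intro i hi j hj
    exact (Finset.sum_eq_zero_iff_of_nonneg (fun j _ => Complex.normSq_nonneg _)).mp
      (h1 i hi) j hj
  ext i j
  simpa using Complex.normSq_eq_zero.mp (hz j (Finset.mem_univ _) i (Finset.mem_univ _))

theorem lstar_adjoint (H : Matrix n n ℂ) (hH : H.IsHermitian) (L : K → Matrix n n ℂ)
    (X ρ : Matrix n n ℂ) :
    trace ((Lstar H L X)ᴴ * ρ) = trace (Xᴴ * Lmap H L ρ) := by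
  have h2 : star (1/2 : ℂ) = (1/2 : ℂ) := by norm_num
  have hI : star Complex.I = -Complex.I := by simp [Complex.star_def, Complex.conj_I]
  have t1 : trace ((Complex.I • (H * X - X * H))ᴴ * ρ)
      = trace (Xᴴ * ((-Complex.I) • (H * ρ - ρ * H))) := by
    simp only [conjTranspose_smul, conjTranspose_sub, conjTranspose_mul, hH.eq, hI,
      Matrix.smul_mul, Matrix.mul_smul, trace_smul, sub_mul, mul_sub, trace_sub]
    have e2 : (H * Xᴴ * ρ).trace = (Xᴴ * (ρ * H)).trace := by
      rw [trace_mul_cycle, trace_mul_comm]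
    rw [e2, mul_assoc]
  have t2 : ∀ B : Matrix n n ℂ, trace ((Bᴴ * X * B)ᴴ * ρ) = trace (Xᴴ * (B * ρ * Bᴴ)) := by
    intro B
    simp only [conjTranspose_mul, conjTranspose_conjTranspose, mul_assoc]
    rw [trace_mul_comm]
    simp only [mul_assoc]
  have t3 : ∀ B : Matrix n n ℂ,
      trace (((1/2 : ℂ) • (Bᴴ * B * X + X * (Bᴴ * B)))ᴴ * ρ)
        = trace (Xᴴ * ((1/2 : ℂ) • (Bᴴ * B * ρ + ρ * (Bᴴ * B)))) := by
    intro B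
    simp only [conjTranspose_smul, conjTranspose_add, conjTranspose_mul,
      conjTranspose_conjTranspose, h2, Matrix.smul_mul, Matrix.mul_smul, trace_smul,
      add_mul, mul_add, trace_add, mul_assoc]
    congr 2
    rw [← mul_assoc Bᴴ B (Xᴴ * ρ), trace_mul_comm]
    simp only [mul_assoc]
  simp only [Lstar, Lmap, conjTranspose_add, conjTranspose_sum, conjTranspose_sub,
    add_mul, sub_mul, Finset.sum_mul, mul_add, mul_sub, Finset.mul_sum,
    trace_add, trace_sub, trace_sum, t1, t2, t3]

theorem lstar_conjTranspose (H : Matrix n n ℂ) (hH : H.IsHermitian) (L : K → Matrix n n ℂ)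
    (X : Matrix n n ℂ) : (Lstar H L X)ᴴ = Lstar H L Xᴴ := by
  have h2 : star (1/2 : ℂ) = (1/2 : ℂ) := by norm_num
  have hI : star Complex.I = -Complex.I := by simp [Complex.star_def, Complex.conj_I]
  simp only [Lstar, conjTranspose_add, conjTranspose_sum, conjTranspose_smul,
    conjTranspose_sub, conjTranspose_mul, conjTranspose_conjTranspose, hH.eq, h2, hI,
    mul_assoc]
  congr 1
  · rw [neg_smul, ← smul_neg, neg_sub]
  · refine Finset.sum_congr rfl fun k _ => ?_
    congr 1
    rw [add_comm]

theorem exists_star_eigen (H : Matrix n n ℂ) (hH : H.IsHermitian) (L : K → Matrix n n ℂ)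
    (ρ : Matrix n n ℂ) (hρ : ρ ≠ 0) (lam : ℂ) (heig : Lmap H L ρ = lam • ρ) :
    ∃ A : Matrix n n ℂ, A ≠ 0 ∧ Lstar H L A = (starRingEnd ℂ) lam • A := by
  classical
  by_contra hcon
  push_neg at hcon
  set S : Matrix n n ℂ →ₗ[ℂ] Matrix n n ℂ :=
    LstarL H L - (starRingEnd ℂ) lam • LinearMap.id with hS
  have hSapp : ∀ X, S X = Lstar H L X - (starRingEnd ℂ) lam • X := by
    intro X
    simp [hS, LstarL_apply]
  have hSinj : Function.Injective S := by
    rw [← LinearMap.ker_eq_bot, Submodule.eq_bot_iff]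
    intro X hX
    by_contra hX0
    refine hcon X hX0 ?_
    have h0 := LinearMap.mem_ker.mp hX
    rw [hSapp] at h0
    exact sub_eq_zero.mp h0
  obtain ⟨X, hX⟩ := LinearMap.injective_iff_surjective.mp hSinj ρ
  have hzero : trace (ρᴴ * ρ) = 0 := by
    calc trace (ρᴴ * ρ) = trace ((S X)ᴴ * ρ) := by rw [hX]
      _ = trace ((Lstar H L X)ᴴ * ρ) - lam * trace (Xᴴ * ρ) := by
          rw [hSapp]
          simp only [conjTranspose_sub, conjTranspose_smul, sub_mul, trace_sub,
            Matrix.smul_mul, trace_smul, smul_eq_mul]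
          rw [show star ((starRingEnd ℂ) lam) = lam from Complex.conj_conj lam]
      _ = trace (Xᴴ * Lmap H L ρ) - lam * trace (Xᴴ * ρ) := by
          rw [lstar_adjoint H hH L X ρ]
      _ = 0 := by
          rw [heig, Matrix.mul_smul, trace_smul, smul_eq_mul, sub_self]
  exact hρ (trace_self_eq_zero ρ hzero)

theorem quad_bound {M : Matrix n n ℂ} (hM : M.IsHermitian) (c : ℝ)
    (hc : ∀ i, hM.eigenvalues i ≤ c) (w : n → ℂ) :
    (star w ⬝ᵥ (M *ᵥ w)).re ≤ c * (star w ⬝ᵥ w).re := by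
  classical
  set U : Matrix n n ℂ := (hM.eigenvectorUnitary : Matrix n n ℂ) with hUdef
  have hU : U * star U = 1 := (Matrix.mem_unitaryGroup_iff).mp hM.eigenvectorUnitary.2
  have hP : ((c : ℂ) • (1 : Matrix n n ℂ) - M).PosSemidef := by
    have hdecomp : (c : ℂ) • (1 : Matrix n n ℂ) - M
        = U * diagonal (fun i => (c : ℂ) - (RCLike.ofReal ∘ hM.eigenvalues) i) * star U := by
      conv_lhs => rw [hM.spectral_theorem, Unitary.conjStarAlgAut_apply]
      rw [← diagonal_sub, ← smul_one_eq_diagonal, mul_sub, sub_mul, Matrix.mul_smul, mul_one,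
        Matrix.smul_mul, hU]
    rw [hdecomp, Matrix.star_eq_conjTranspose]
    refine PosSemidef.mul_mul_conjTranspose_same (posSemidef_diagonal_iff.mpr fun i => ?_) U
    have : ((c - hM.eigenvalues i : ℝ) : ℂ) = (c : ℂ) - (RCLike.ofReal ∘ hM.eigenvalues) i := by
      push_cast [Function.comp]
      norm_num
    rw [← this]
    exact Complex.zero_le_real.mpr (by linarith [hc i])
  have h0 := hP.re_dotProduct_nonneg w
  have hexp : star w ⬝ᵥ (((c : ℂ) • (1 : Matrix n n ℂ) - M) *ᵥ w)
      = (c:ℂ) * (star w ⬝ᵥ w) - star w ⬝ᵥ (M *ᵥ w) := by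
    rw [sub_mulVec, smul_mulVec, one_mulVec, dotProduct_sub, dotProduct_smul,
      smul_eq_mul]
  rw [hexp] at h0
  simp only [RCLike.re_to_complex, Complex.sub_re, Complex.re_ofReal_mul] at h0
  linarith

theorem lstar_diss (H : Matrix n n ℂ) (L : K → Matrix n n ℂ) (A : Matrix n n ℂ) :
    Lstar H L (Aᴴ * A) = Lstar H L Aᴴ * A + Aᴴ * Lstar H L A
      + ∑ k, (L k * A - A * L k)ᴴ * (L k * A - A * L k) := by
  have hHam : Complex.I • (H * (Aᴴ * A) - (Aᴴ * A) * H) =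
      (Complex.I • (H * Aᴴ - Aᴴ * H)) * A + Aᴴ * (Complex.I • (H * A - A * H)) := by
    simp only [Matrix.smul_mul, Matrix.mul_smul, sub_mul, mul_sub, smul_sub, mul_assoc]
    module
  have hk : ∀ B : Matrix n n ℂ,
      Bᴴ * (Aᴴ * A) * B - (1/2 : ℂ) • (Bᴴ * B * (Aᴴ * A) + (Aᴴ * A) * (Bᴴ * B)) =
        (Bᴴ * Aᴴ * B - (1/2 : ℂ) • (Bᴴ * B * Aᴴ + Aᴴ * (Bᴴ * B))) * A
          + Aᴴ * (Bᴴ * A * B - (1/2 : ℂ) • (Bᴴ * B * A + A * (Bᴴ * B)))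
          + (B * A - A * B)ᴴ * (B * A - A * B) := by
    intro B
    simp only [conjTranspose_sub, conjTranspose_mul, Matrix.smul_mul, Matrix.mul_smul,
      mul_add, add_mul, sub_mul, mul_sub, smul_add, smul_sub, mul_assoc]
    module
  calc Lstar H L (Aᴴ * A)
      = Complex.I • (H * (Aᴴ * A) - (Aᴴ * A) * H) +
          ∑ k, ((L k)ᴴ * (Aᴴ * A) * L k
            - (1/2 : ℂ) • ((L k)ᴴ * L k * (Aᴴ * A) + (Aᴴ * A) * ((L k)ᴴ * L k))) := rfl
    _ = ((Complex.I • (H * Aᴴ - Aᴴ * H)) * A + Aᴴ * (Complex.I • (H * A - A * H))) +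
          ∑ k, ((((L k)ᴴ * Aᴴ * L k
              - (1/2 : ℂ) • ((L k)ᴴ * L k * Aᴴ + Aᴴ * ((L k)ᴴ * L k))) * A
            + Aᴴ * ((L k)ᴴ * A * L k
              - (1/2 : ℂ) • ((L k)ᴴ * L k * A + A * ((L k)ᴴ * L k)))
            + (L k * A - A * L k)ᴴ * (L k * A - A * L k))) := by
        rw [hHam]
        exact congrArg _ (Finset.sum_congr rfl fun k _ => hk (L k))
    _ = Lstar H L Aᴴ * A + Aᴴ * Lstar H L A
          + ∑ k, (L k * A - A * L k)ᴴ * (L k * A - A * L k) := by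
        simp only [Lstar, Finset.sum_add_distrib, add_mul, mul_add, Finset.sum_mul,
          Finset.mul_sum]
        abel

end LiouvilleAux

open scoped ComplexOrder in
open LiouvilleAux in
theorem liouvillian_eigenvalue_nonpositive
    {n K : Type*} [Fintype n] [DecidableEq n] [Nonempty n] [Fintype K]
    (H : Matrix n n ℂ) (hH : H.IsHermitian) (L : K → Matrix n n ℂ)
    (ρ : Matrix n n ℂ) (hρ : ρ ≠ 0) (lam : ℂ)
    (heig : Lmap H L ρ = lam • ρ) :
    lam.re ≤ 0 := by
  classical
  obtain ⟨A, hA0, hAeig⟩ := exists_star_eigen H hH L ρ hρ lam heig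
  have hAHeig : Lstar H L Aᴴ = lam • Aᴴ := by
    rw [← lstar_conjTranspose H hH L A, hAeig, conjTranspose_smul]
    rw [show star ((starRingEnd ℂ) lam) = lam from Complex.conj_conj lam]
  set M : Matrix n n ℂ := Aᴴ * A with hMdef
  have hMpsd : M.PosSemidef := posSemidef_conjTranspose_mul_self A
  have hMH : M.IsHermitian := hMpsd.isHermitian
  have hM0 : M ≠ 0 := fun h => hA0 (Matrix.conjTranspose_mul_self_eq_zero.mp h)
  obtain ⟨i₀, -, hi₀⟩ := Finset.exists_max_image Finset.univ hMH.eigenvalues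
    ⟨Classical.arbitrary n, Finset.mem_univ _⟩
  have hi₀' : ∀ i, hMH.eigenvalues i ≤ hMH.eigenvalues i₀ :=
    fun i => hi₀ i (Finset.mem_univ i)
  set c : ℝ := hMH.eigenvalues i₀ with hcdef
  have hcpos : 0 < c := by
    rcases lt_or_eq_of_le (hMpsd.eigenvalues_nonneg i₀) with h | h
    · exact h
    · exfalso
      apply hM0
      have hall : ∀ i, hMH.eigenvalues i = 0 :=
        fun i => le_antisymm (h ▸ hi₀' i) (hMpsd.eigenvalues_nonneg i)
      have hdiagzero : diagonal (RCLike.ofReal ∘ hMH.eigenvalues) = (0 : Matrix n n ℂ) := by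
        ext i j
        by_cases hij : i = j <;> simp [diagonal, hij, hall]
      calc M = _ := hMH.spectral_theorem
        _ = 0 := by rw [hdiagzero]; simp
  set v : n → ℂ := ⇑(hMH.eigenvectorBasis i₀) with hvdef
  have hMv : M *ᵥ v = (c:ℂ) • v := by
    rw [hvdef, hMH.mulVec_eigenvectorBasis i₀]
    ext i
    simp [Complex.real_smul, hcdef]
  have hv1 : star v ⬝ᵥ v = 1 := by
    have h := hMH.eigenvectorBasis.orthonormal.1 i₀
    have h2 : (inner ℂ (hMH.eigenvectorBasis i₀) (hMH.eigenvectorBasis i₀) : ℂ) = 1 := by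
      rw [inner_self_eq_norm_sq_to_K, h]
      norm_num
    rw [EuclideanSpace.inner_eq_star_dotProduct] at h2
    simpa [dotProduct_comm] using h2
  have hvM : star v ᵥ* M = (c:ℂ) • star v := by
    have h := star_mulVec M v
    rw [hMv, hMH.eq] at h
    rw [← h, star_smul]
    congr 1
    simp [Complex.star_def, Complex.conj_ofReal]
  -- lower bound for the Rayleigh-type quotient of `Lstar M`
  have hdiss : Lstar H L M = (lam + (starRingEnd ℂ) lam) • M
      + ∑ k, (L k * A - A * L k)ᴴ * (L k * A - A * L k) := by
    rw [hMdef, lstar_diss H L A, hAHeig, hAeig, Matrix.smul_mul, Matrix.mul_smul, add_smul]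
  have hqsum : ∀ (f : K → Matrix n n ℂ),
      star v ⬝ᵥ ((∑ k, f k) *ᵥ v) = ∑ k, star v ⬝ᵥ (f k *ᵥ v) := by
    intro f
    have h1 : (∑ k, f k) *ᵥ v = ∑ k, f k *ᵥ v := by
      ext i
      simp only [mulVec, dotProduct, Matrix.sum_apply, Finset.sum_mul, Finset.sum_apply]
      rw [Finset.sum_comm]
    rw [h1]
    simp only [dotProduct, Finset.sum_apply, Finset.mul_sum]
    rw [Finset.sum_comm]
  have hlow : 2 * lam.re * c ≤ (star v ⬝ᵥ ((Lstar H L M) *ᵥ v)).re := by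
    rw [hdiss, add_mulVec, dotProduct_add, smul_mulVec, hMv, dotProduct_smul,
      dotProduct_smul, hv1, hqsum]
    simp only [Complex.add_re, smul_eq_mul, mul_one, Complex.add_conj]
    have h1 : (((2 * lam.re : ℝ) : ℂ) * (c:ℂ)).re = 2 * lam.re * c := by
      rw [Complex.re_ofReal_mul]
      simp
    rw [h1, Complex.re_sum]
    have h2 : ∀ k : K, 0 ≤ (star v ⬝ᵥ (((L k * A - A * L k)ᴴ * (L k * A - A * L k)) *ᵥ v)).re := by
      intro k
      have := (posSemidef_conjTranspose_mul_self (L k * A - A * L k)).re_dotProduct_nonneg v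
      simpa [RCLike.re_to_complex] using this
    have h3 : 0 ≤ ∑ k : K, (star v ⬝ᵥ (((L k * A - A * L k)ᴴ * (L k * A - A * L k)) *ᵥ v)).re :=
      Finset.sum_nonneg fun k _ => h2 k
    linarith
  -- upper bound
  have hupH : star v ⬝ᵥ ((Complex.I • (H * M - M * H)) *ᵥ v) = 0 := by
    rw [smul_mulVec, sub_mulVec, ← mulVec_mulVec v H M, ← mulVec_mulVec v M H, hMv,
      mulVec_smul, dotProduct_smul, dotProduct_sub, dotProduct_smul,
      dotProduct_mulVec (star v) M, hvM, smul_dotProduct]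
    simp only [smul_eq_mul]
    ring
  have hupK : ∀ k : K, (star v ⬝ᵥ (((L k)ᴴ * M * L k
      - (1/2:ℂ) • ((L k)ᴴ * L k * M + M * ((L k)ᴴ * L k))) *ᵥ v)).re ≤ 0 := by
    intro k
    set B : Matrix n n ℂ := L k with hBdef
    set w : n → ℂ := B *ᵥ v with hwdef
    have e1 : star v ⬝ᵥ ((Bᴴ * M * B) *ᵥ v) = star w ⬝ᵥ (M *ᵥ w) := by
      rw [← mulVec_mulVec v (Bᴴ * M) B, ← mulVec_mulVec (B *ᵥ v) Bᴴ M,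
        dotProduct_mulVec (star v) Bᴴ, ← star_mulVec, hwdef]
    have e2 : star v ⬝ᵥ ((Bᴴ * B * M) *ᵥ v) = (c:ℂ) * (star w ⬝ᵥ w) := by
      rw [← mulVec_mulVec v (Bᴴ * B) M, ← mulVec_mulVec (M *ᵥ v) Bᴴ B, hMv, mulVec_smul,
        mulVec_smul, dotProduct_smul, dotProduct_mulVec (star v) Bᴴ, ← star_mulVec, hwdef,
        smul_eq_mul]
    have e3 : star v ⬝ᵥ ((M * (Bᴴ * B)) *ᵥ v) = (c:ℂ) * (star w ⬝ᵥ w) := by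
      rw [← mulVec_mulVec v M (Bᴴ * B), dotProduct_mulVec (star v) M, hvM, smul_dotProduct,
        smul_eq_mul, ← mulVec_mulVec v Bᴴ B, dotProduct_mulVec (star v) Bᴴ, ← star_mulVec,
        hwdef]
    rw [sub_mulVec, dotProduct_sub, smul_mulVec, dotProduct_smul, add_mulVec,
      dotProduct_add, e1, e2, e3]
    have e4 : (1/2:ℂ) • ((c:ℂ) * (star w ⬝ᵥ w) + (c:ℂ) * (star w ⬝ᵥ w))
        = (c:ℂ) * (star w ⬝ᵥ w) := by
      rw [smul_eq_mul]
      ring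
    rw [e4, Complex.sub_re, Complex.re_ofReal_mul]
    have hb := quad_bound hMH c hi₀' w
    linarith
  have hup : (star v ⬝ᵥ ((Lstar H L M) *ᵥ v)).re ≤ 0 := by
    have : star v ⬝ᵥ ((Lstar H L M) *ᵥ v)
        = star v ⬝ᵥ ((Complex.I • (H * M - M * H)) *ᵥ v)
          + ∑ k, star v ⬝ᵥ (((L k)ᴴ * M * L k
            - (1/2:ℂ) • ((L k)ᴴ * L k * M + M * ((L k)ᴴ * L k))) *ᵥ v) := by
      rw [Lstar, add_mulVec, dotProduct_add, hqsum]
    rw [this, hupH, zero_add, Complex.re_sum]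
    exact Finset.sum_nonpos fun k _ => hupK k
  nlinarith
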